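/- arXiv:1710.00562 — 7 statements merged into one kernel-verified Lean document; each statement's English description precedes it below -/
import Mathlib

section
/- Let A be an n×n matrix with entries in the field Z/2Z. Suppose that every principal minor of A (the determinant of the submatrix of A obtained by restricting rows and columns to a nonempty subset S of the index set) equals 1, and that det A = 1. Then A is conjugate by a permutation matrix to a unipotent upper triangular matrix; that is, there exists a permutation σ of {1,…,n} such that the matrix B with B_{ij} = A_{σ(i)σ(j)} satisfies B_{ii} = 1 for all i and B_{ij} = 0 whenever j < i. -/
/-!
Call `j` an out-neighbour of `i` when `A i j ≠ 0`. If every vertex of `S` has exactly one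
out-neighbour in `S` besides itself, every row of the principal submatrix on `S` sums to
`1 + 1 = 0`, so its determinant vanishes. A minimal `S` without a sink has this shape: for
`v ∈ S`, a sink `u` of `S \ {v}` has `v` as its only other out-neighbour in `S`, and `v ↦ u`
is injective, hence onto `S`. So every nonempty set has a sink, the out-neighbour relation is
acyclic, and a linear extension of it orders the indices as required.
-/

open Finset Relation

namespace Matrix

theorem det_eq_zero_of_forall_sum_row_eq_zero {ι R : Type*} [Fintype ι] [DecidableEq ι]
    [Nonempty ι] [CommRing R] (M : Matrix ι ι R) (h : ∀ i, ∑ j, M i j = 0) : M.det = 0 := by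
  inhabit ι
  have hcol := M.det_updateCol_sum default 1
  simp only [Pi.one_apply, one_smul, h] at hcol
  rw [← hcol]
  exact det_eq_zero_of_column_eq_zero default fun i => by simp

theorem det_submatrix_singleton {ι R : Type*} [DecidableEq ι] [CommRing R] (M : Matrix ι ι R)
    (i : ι) :
    (M.submatrix (fun x : ({i} : Finset ι) => (x : ι)) (fun x : ({i} : Finset ι) => (x : ι))).det =
      M i i := by
  rw [det_unique]
  simp

end Matrix

section Sinks

variable {α : Type*} (E : α → α → Prop)

def HasSink (S : Finset α) : Prop :=
  ∃ i ∈ S, ∀ j ∈ S, E i j → j = i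

variable {E}

theorem not_transGen_self_of_forall_hasSink [Finite α]
    (h : ∀ S : Finset α, S.Nonempty → HasSink E S) (a : α) :
    ¬ TransGen (fun i j => E i j ∧ j ≠ i) a a := by
  have hwf : WellFounded fun j i => E i j ∧ j ≠ i :=
    WellFounded.wellFounded_iff_has_min.2 fun s hs => by
      obtain ⟨m, hm, hsink⟩ := h (s.toFinite.toFinset) (by simpa using hs)
      exact ⟨m, by simpa using hm, fun x hx hE => hE.2 (hsink x (by simpa using hx) hE.1)⟩
  exact fun hcycle => hwf.transGen.irrefl.irrefl a (TransGen.swap a a hcycle)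

variable [DecidableEq α]

theorem exists_unique_out_of_minimal_not_hasSink {S : Finset α} (hS : ¬ HasSink E S)
    (hsub : ∀ T ⊂ S, T.Nonempty → HasSink E T) :
    ∀ i ∈ S, ∃ j ∈ S, j ≠ i ∧ E i j ∧ ∀ k ∈ S, E i k → k = i ∨ k = j := by
  simp only [HasSink, not_exists, not_and, not_forall] at hS
  have hin : ∀ v ∈ S, ∃ u ∈ S, u ≠ v ∧ E u v ∧ ∀ k ∈ S, E u k → k = u ∨ k = v := by
    intro v hv
    obtain ⟨w, hw, -, hwv⟩ := hS v hv
    obtain ⟨u, hu, hsink⟩ := hsub (S.erase v) (erase_ssubset hv) ⟨w, mem_erase.2 ⟨hwv, hw⟩⟩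
    obtain ⟨huv, huS⟩ := mem_erase.1 hu
    have hout : ∀ k ∈ S, E u k → k = u ∨ k = v := fun k hk hE =>
      (ne_or_eq k v).imp_left fun hkv => hsink k (mem_erase.2 ⟨hkv, hk⟩) hE
    obtain ⟨k, hk, hE, hku⟩ := hS u huS
    refine ⟨u, huS, huv, ?_, hout⟩
    obtain rfl := (hout k hk hE).resolve_left hku
    exact hE
  choose! g hgS hgne hgE hgout using hin
  have hinj : Set.InjOn g S := fun v hv v' hv' heq =>
    ((hgout v hv v' hv' (heq ▸ hgE v' hv')).resolve_left fun h => hgne v' hv' (h.trans heq).symm)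
      |>.symm
  intro i hi
  obtain ⟨v, hv, rfl⟩ := surjOn_of_injOn_of_card_le g hgS hinj le_rfl hi
  exact ⟨v, hv, (hgne v hv).symm, hgE v hv, hgout v hv⟩

end Sinks

theorem exists_equiv_fin_of_acyclic {α : Type*} [Fintype α] {n : ℕ} (hn : Fintype.card α = n)
    (r : α → α → Prop) (hr : ∀ a, ¬ TransGen r a a) :
    ∃ e : Fin n ≃ α, ∀ i j, r (e i) (e j) → i < j := by
  let _ : PartialOrder α :=
    { le := ReflTransGen r
      le_refl := fun _ => .refl
      le_trans := fun _ _ _ => ReflTransGen.trans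
      le_antisymm := fun a b hab hba => by
        rcases reflTransGen_iff_eq_or_transGen.1 hab with h | h
        · exact h.symm
        · exact absurd (h.trans_left hba) (hr a) }
  let _ : Fintype (LinearExtension α) := ‹Fintype α›
  let f := Fintype.orderIsoFinOfCardEq (LinearExtension α) hn
  have hmono : StrictMono (toLinearExtension : α →o LinearExtension α) :=
    toLinearExtension.monotone.strictMono_of_injective fun _ _ h => h
  refine ⟨f.toEquiv, fun i j hij => f.lt_iff_lt.1 (hmono ?_)⟩
  exact lt_of_le_of_ne (ReflTransGen.single hij) fun h => hr _ (h ▸ TransGen.single hij)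

theorem hasSink_of_forall_det_submatrix_eq_one {ι : Type*} [Fintype ι] [DecidableEq ι]
    (A : Matrix ι ι (ZMod 2))
    (hminor : ∀ S : Finset ι, S.Nonempty →
      (A.submatrix (fun x : S => (x : ι)) (fun x : S => (x : ι))).det = 1)
    (S : Finset ι) (hne : S.Nonempty) : HasSink (fun i j => A i j ≠ 0) S := by
  induction S using Finset.strongInduction with
  | H S ih =>
  by_contra hS
  have hout := exists_unique_out_of_minimal_not_hasSink hS ih
  have : Nonempty S := hne.to_subtype
  refine one_ne_zero ((hminor S hne).symm.trans
    (Matrix.det_eq_zero_of_forall_sum_row_eq_zero _ fun ⟨i, hi⟩ => ?_))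
  obtain ⟨j, hj, hji, hE, honly⟩ := hout i hi
  have hii : A i i = 1 := by
    simpa [Matrix.det_submatrix_singleton] using hminor {i} (singleton_nonempty i)
  have hij : A i j = 1 := (show ∀ a : ZMod 2, a ≠ 0 → a = 1 by decide) _ hE
  calc ∑ k : S, A i k = ∑ k ∈ S, A i k := sum_coe_sort S (A i)
    _ = ∑ k ∈ {i, j}, A i k := by
      refine (sum_subset (by simp [insert_subset_iff, hi, hj]) fun k hk hk' => ?_).symm
      by_contra hA
      rcases honly k hk hA with rfl | rfl <;> simp at hk'
    _ = 0 := by rw [sum_pair hji.symm, hii, hij]; decide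

theorem stmt0_general (n : ℕ) (A : Matrix (Fin n) (Fin n) (ZMod 2))
    (hminor : ∀ S : Finset (Fin n), S.Nonempty →
      (A.submatrix (fun x : S => (x : Fin n)) (fun x : S => (x : Fin n))).det = 1) :
    ∃ σ : Equiv.Perm (Fin n),
      (∀ i, A (σ i) (σ i) = 1) ∧ ∀ i j, j < i → A (σ i) (σ j) = 0 := by
  obtain ⟨σ, hσ⟩ := exists_equiv_fin_of_acyclic (Fintype.card_fin n) _
    (not_transGen_self_of_forall_hasSink (hasSink_of_forall_det_submatrix_eq_one A hminor))
  refine ⟨σ, fun i => ?_, fun i j hji => ?_⟩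
  · simpa [Matrix.det_submatrix_singleton] using hminor {σ i} (singleton_nonempty _)
  · by_contra hA
    exact lt_asymm hji (hσ i j ⟨hA, σ.injective.ne hji.ne⟩)

/-- A Z/2Z-matrix all of whose principal minors equal 1 (in particular
`det A = 1`) is conjugate by a permutation matrix to a unipotent upper
triangular matrix. -/
theorem stmt0 (n : ℕ) (A : Matrix (Fin n) (Fin n) (ZMod 2))
    (hminor : ∀ S : Finset (Fin n), S.Nonempty →
      (A.submatrix (fun x : S => (x : Fin n)) (fun x : S => (x : Fin n))).det = 1)
    (hdet : A.det = 1) :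
    ∃ σ : Equiv.Perm (Fin n),
      (∀ i, A (σ i) (σ i) = 1) ∧ ∀ i j, j < i → A (σ i) (σ j) = 0 :=
  stmt0_general n A hminor
end

section
/- Let m ≥ 1 and let n_1,…,n_m be positive integers. For each pair (i,j) with 1 ≤ i,j ≤ m let a_i^j be a row vector of length n_j with entries in Z/2Z (so the data form an m×m 'vector matrix' A). For every selection k = (k_1,…,k_m) with 1 ≤ k_j ≤ n_j, let A_{k_1⋯k_m} be the m×m matrix over Z/2Z whose (i,j) entry is the k_j-th entry of the vector a_i^j. Suppose that for every such selection, every principal minor of A_{k_1⋯k_m} equals 1. Then A is conjugate by a permutation to a unipotent upper triangular vector matrix; that is, there exists a permutation σ of {1,…,m} such that for all i every entry of the vector a_{σ(i)}^{σ(i)} equals 1, and for all i,j with j < i every entry of the vector a_{σ(i)}^{σ(j)} equals 0. -/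
/-!
Read the off-diagonal support of a matrix `M` over `ZMod 2` as a digraph with an edge `x → y`
when `M x y ≠ 0`. If `M` has all principal minors equal to `1`, this digraph is acyclic. Otherwise
take a nonempty vertex set `S` of least size in which every vertex has a predecessor. Any predecessor
map `f` on `S` maps `S` onto a set with the same property, so it is a bijection of `S`; hence
every vertex of `S` has exactly one predecessor in `S`. Every column of the principal submatrix
on `S` then contains exactly two ones (the diagonal entry, which is a `1 × 1` minor, and the
predecessor), so the all-ones row vector lies in its left kernel and its determinant vanishes.

For a vector matrix, a cycle in the digraph "`a x y` has a nonzero entry" would give, after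
choosing for each vertex of the cycle the entry that witnesses its incoming edge, such a cycle
for one of the matrices `A_k`. So that digraph is acyclic, and a topological sort gives `σ`.
-/

namespace Matrix

variable {ι : Type*} [DecidableEq ι]

lemma diag_eq_one_of_principal_minors {M : Matrix ι ι (ZMod 2)}
    (hM : ∀ S : Finset ι, S.Nonempty → (M.submatrix ((↑) : S → ι) (↑)).det = 1) (i : ι) :
    M i i = 1 := by
  simpa [det_unique] using hM {i} (Finset.singleton_nonempty i)

def HasNoSourceIn (M : Matrix ι ι (ZMod 2)) (S : Finset ι) : Prop :=
  ∀ y ∈ S, ∃ x ∈ S, x ≠ y ∧ M x y ≠ 0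

section MinimalNoSource

variable {M : Matrix ι ι (ZMod 2)} {S : Finset ι}
  (hmin : ∀ T ⊆ S, T.Nonempty → M.HasNoSourceIn T → S.card ≤ T.card)
include hmin

lemma image_eq_of_minimal_hasNoSourceIn {f : ι → ι}
    (hf : ∀ y ∈ S, f y ∈ S ∧ f y ≠ y ∧ M (f y) y ≠ 0) (hne : S.Nonempty) :
    S.image f = S := by
  have hsub : S.image f ⊆ S := fun _ hz => by
    obtain ⟨y, hy, rfl⟩ := Finset.mem_image.mp hz
    exact (hf y hy).1
  refine Finset.eq_of_subset_of_card_le hsub (hmin _ hsub (hne.image f) fun z hz => ?_)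
  obtain ⟨y, hy, rfl⟩ := Finset.mem_image.mp hz
  exact ⟨f (f y), Finset.mem_image_of_mem f (hf y hy).1, (hf _ (hf y hy).1).2⟩

lemma eq_of_minimal_hasNoSourceIn (hS : M.HasNoSourceIn S) {x x' y : ι}
    (hx : x ∈ S) (hx' : x' ∈ S) (hy : y ∈ S) (hxy : x ≠ y) (hx'y : x' ≠ y)
    (hMx : M x y ≠ 0) (hMx' : M x' y ≠ 0) : x = x' := by
  have hpred : ∀ z, ∃ w, z ∈ S → w ∈ S ∧ w ≠ z ∧ M w z ≠ 0 := fun z =>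
    if hz : z ∈ S then (hS z hz).imp fun _ h _ => h else ⟨z, fun h => absurd h hz⟩
  choose g hg using hpred
  have hupdate : ∀ w ∈ S, w ≠ y → M w y ≠ 0 →
      ∀ z ∈ S, Function.update g y w z ∈ S ∧ Function.update g y w z ≠ z ∧
        M (Function.update g y w z) z ≠ 0 := by
    intro w hw hwy hMw z hz
    rcases eq_or_ne z y with rfl | hzy
    · simpa using ⟨hw, hwy, hMw⟩
    · simpa [hzy] using hg z hz
  have himage := image_eq_of_minimal_hasNoSourceIn hmin (hupdate x hx hxy hMx) ⟨y, hy⟩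
  have hinj : Set.InjOn (Function.update g y x') S := Finset.card_image_iff.mp <| by
    rw [image_eq_of_minimal_hasNoSourceIn hmin (hupdate x' hx' hx'y hMx') ⟨y, hy⟩]
  by_contra hne
  obtain ⟨w, hw, hwx'⟩ := Finset.mem_image.mp (himage.symm ▸ hx' : x' ∈ S.image _)
  have hwy : w ≠ y := by rintro rfl; simp [hne] at hwx'
  refine hwy (hinj hw hy ?_)
  simp only [Function.update_of_ne hwy, Function.update_self] at hwx' ⊢
  exact hwx'

end MinimalNoSource

lemma det_submatrix_eq_zero_of_unique_pred {M : Matrix ι ι (ZMod 2)} {S : Finset ι}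
    (hS : M.HasNoSourceIn S) (hne : S.Nonempty) (hdiag : ∀ y ∈ S, M y y = 1)
    (huniq : ∀ y ∈ S, ∀ x ∈ S, ∀ x' ∈ S, x ≠ y → x' ≠ y → M x y ≠ 0 → M x' y ≠ 0 → x = x') :
    (M.submatrix ((↑) : S → ι) (↑)).det = 0 := by
  have hcol : ∀ y ∈ S, ∑ x ∈ S, M x y = 0 := by
    intro y hy
    obtain ⟨p, hp, hpy, hMp⟩ := hS y hy
    have hone : ∀ z : ZMod 2, z ≠ 0 → z = 1 := by decide
    rw [Finset.sum_eq_add_of_mem y p hy hp hpy.symm, hdiag y hy, hone _ hMp]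
    · decide
    rintro x hx ⟨hxy, hxp⟩
    by_contra hMx
    exact hxp (huniq y hy x hx p hp hxy hpy hMx hMp)
  refine exists_vecMul_eq_zero_iff.mp ⟨fun _ => 1, fun h => one_ne_zero (congrFun h
    ⟨_, hne.choose_spec⟩), funext fun y => ?_⟩
  simpa [vecMul, dotProduct, Finset.sum_attach S (fun x => M x y)] using hcol y y.2

theorem exists_source_of_principal_minors {M : Matrix ι ι (ZMod 2)}
    (hM : ∀ S : Finset ι, S.Nonempty → (M.submatrix ((↑) : S → ι) (↑)).det = 1)
    (S : Finset ι) (hne : S.Nonempty) : ∃ y ∈ S, ∀ x ∈ S, x ≠ y → M x y = 0 := by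
  classical
  by_contra! hS
  set 𝒮 := S.powerset.filter fun T : Finset ι => T.Nonempty ∧ M.HasNoSourceIn T
  obtain ⟨T, hT𝒮, hmin⟩ := 𝒮.exists_min_image Finset.card
    ⟨S, Finset.mem_filter.mpr ⟨Finset.mem_powerset_self S, hne, hS⟩⟩
  obtain ⟨hTS, hTne, hT⟩ := Finset.mem_filter.mp hT𝒮
  have hTmin : ∀ U ⊆ T, U.Nonempty → M.HasNoSourceIn U → T.card ≤ U.card :=
    fun U hUT hUne hU => hmin U (Finset.mem_filter.mpr
      ⟨Finset.mem_powerset.mpr (hUT.trans (Finset.mem_powerset.mp hTS)), hUne, hU⟩)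
  have hdet := det_submatrix_eq_zero_of_unique_pred hT hTne
    (fun y _ => diag_eq_one_of_principal_minors hM y)
    (fun y hy x hx x' hx' => eq_of_minimal_hasNoSourceIn hTmin hT hx hx' hy)
  rw [hM T hTne] at hdet
  exact one_ne_zero hdet

end Matrix

lemma Fin.exists_perm_lt_of_rel_of_wellFounded {m : ℕ} {r : Fin m → Fin m → Prop}
    (hr : WellFounded r) : ∃ σ : Equiv.Perm (Fin m), ∀ i j, r (σ i) (σ j) → i < j := by
  have : IsWellFounded (Fin m) r := ⟨hr⟩
  exact ⟨Tuple.sort (IsWellFounded.rank r), fun i j h =>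
    (Tuple.monotone_sort (IsWellFounded.rank r)).reflect_lt (IsWellFounded.rank_lt_of_rel h)⟩

lemma exists_source_of_principal_minors_vectorMatrix {ι : Type*} [DecidableEq ι] {n : ι → ℕ}
    (hn : ∀ j, 1 ≤ n j) (a : ∀ (_i j : ι), Fin (n j) → ZMod 2)
    (hminor : ∀ (k : ∀ j, Fin (n j)) (S : Finset ι), S.Nonempty →
      (Matrix.submatrix (fun i j => a i j (k j)) ((↑) : S → ι) (↑)).det = 1)
    (S : Finset ι) (hne : S.Nonempty) : ∃ y ∈ S, ∀ x ∈ S, x ≠ y → ∀ t, a x y t = 0 := by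
  by_contra! hS
  choose x hxS hxy t ht using hS
  let k : ∀ j, Fin (n j) := fun y => if hy : y ∈ S then t y hy else ⟨0, hn y⟩
  obtain ⟨y, hy, hcol⟩ := Matrix.exists_source_of_principal_minors (hminor k) S hne
  exact ht y hy (by simpa [k, hy] using hcol _ (hxS y hy) (hxy y hy))

theorem stmt1_general (m : ℕ) (n : Fin m → ℕ) (hn : ∀ j, 1 ≤ n j)
    (a : ∀ (_i j : Fin m), Fin (n j) → ZMod 2)
    (hminor : ∀ (k : ∀ j : Fin m, Fin (n j)) (S : Finset (Fin m)), S.Nonempty →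
      (Matrix.submatrix (fun i j : Fin m => a i j (k j))
        (fun x : S => (x : Fin m)) (fun x : S => (x : Fin m))).det = 1) :
    ∃ σ : Equiv.Perm (Fin m),
      (∀ i, ∀ t : Fin (n (σ i)), a (σ i) (σ i) t = 1) ∧
      ∀ i j, j < i → ∀ t : Fin (n (σ j)), a (σ i) (σ j) t = 0 := by
  let edge : Fin m → Fin m → Prop := fun x y => x ≠ y ∧ ∃ t, a x y t ≠ 0
  have hwf : WellFounded edge := WellFounded.wellFounded_iff_has_min.mpr fun s hs => by
    classical
    obtain ⟨y, hy, hsrc⟩ := exists_source_of_principal_minors_vectorMatrix hn a hminor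
      s.toFinset (Set.toFinset_nonempty.mpr hs)
    refine ⟨y, Set.mem_toFinset.mp hy, fun x hx ⟨hxy, t, ht⟩ => ?_⟩
    exact ht (hsrc x (Set.mem_toFinset.mpr hx) hxy t)
  obtain ⟨σ, hσ⟩ := Fin.exists_perm_lt_of_rel_of_wellFounded hwf
  refine ⟨σ, fun i t => ?_, fun i j hji t => ?_⟩
  · simpa using Matrix.diag_eq_one_of_principal_minors
      (hminor (Function.update (fun j => ⟨0, hn j⟩) (σ i) t)) (σ i)
  · by_contra ht
    exact (hσ i j ⟨σ.injective.ne hji.ne', t, ht⟩).asymm hji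

/-- A vector matrix over Z/2Z all of whose principal minors equal 1 is
conjugate by a permutation to a unipotent upper triangular vector matrix. -/
theorem stmt1 (m : ℕ) (hm : 1 ≤ m) (n : Fin m → ℕ) (hn : ∀ j, 1 ≤ n j)
    (a : ∀ (_i j : Fin m), Fin (n j) → ZMod 2)
    (hminor : ∀ (k : ∀ j : Fin m, Fin (n j)) (S : Finset (Fin m)), S.Nonempty →
      (Matrix.submatrix (fun i j : Fin m => a i j (k j))
        (fun x : S => (x : Fin m)) (fun x : S => (x : Fin m))).det = 1) :
    ∃ σ : Equiv.Perm (Fin m),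
      (∀ i, ∀ t : Fin (n (σ i)), a (σ i) (σ i) t = 1) ∧
      ∀ i j, j < i → ∀ t : Fin (n (σ j)), a (σ i) (σ j) t = 0 :=
  stmt1_general m n hn a hminor
end

section
/- Let R be a commutative ring and let u_1,…,u_n ∈ R. Suppose that for each i with 1 ≤ i ≤ n there is an element y_i ∈ R lying in the additive subgroup generated by u_1,…,u_{i−1} (so y_1 = 0), such that u_i(u_i + y_i) = 0, i.e. u_i² = −u_i y_i. Then for every k with 1 ≤ k ≤ n and all nonnegative integers l_1,…,l_k with l_1 + ⋯ + l_k = k + 1, one has u_1^{l_1} u_2^{l_2} ⋯ u_k^{l_k} = 0. -/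
/-!
Let `Iₖ` be the ideal generated by `u 0, …, u (k-1)`. The relation `u k * (u k + y k) = 0`
with `y k ∈ Iₖ` gives `(u k)² ∈ (u k) Iₖ`, and this is exactly what is needed to get
`(Iₖ + (u k))^(m+1) ⊆ Iₖ^(m+1) + (u k) Iₖ^m`. Hence `Iₖ^(k+1) = 0` implies
`Iₖ₊₁^(k+2) = 0`, and a monomial of degree `k + 1` in `u 0, …, u (k-1)` lies in `Iₖ^(k+1)`.
-/

namespace Ideal

variable {R : Type*}

theorem prod_pow_mem_pow_sum [CommSemiring R] {ι : Type*} {s : Finset ι} {I : Ideal R}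
    {x : ι → R} (hx : ∀ i ∈ s, x i ∈ I) (l : ι → ℕ) :
    ∏ i ∈ s, x i ^ l i ∈ I ^ ∑ i ∈ s, l i := by
  rw [← Finset.prod_pow_eq_pow_sum]
  exact prod_mem_prod fun i hi => pow_mem_pow (hx i hi) (l i)

theorem sup_pow_succ_le_of_sq_le [CommSemiring R] {I J : Ideal R} (h : J ^ 2 ≤ J * I) (m : ℕ) :
    (J ⊔ I) ^ (m + 1) ≤ J * I ^ m ⊔ I ^ (m + 1) := by
  induction m with
  | zero => simp
  | succ m ih =>
    have hJJ : J * (J * I ^ m) ≤ J * I ^ (m + 1) :=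
      calc J * (J * I ^ m) = J ^ 2 * I ^ m := by rw [← mul_assoc, sq]
        _ ≤ J * I * I ^ m := mul_mono_left h
        _ = J * I ^ (m + 1) := by rw [mul_assoc, pow_succ']
    have hIJ : I * (J * I ^ m) = J * I ^ (m + 1) := by rw [mul_left_comm, pow_succ']
    calc (J ⊔ I) ^ (m + 2) = (J ⊔ I) * (J ⊔ I) ^ (m + 1) := pow_succ' _ _
      _ ≤ (J ⊔ I) * (J * I ^ m ⊔ I ^ (m + 1)) := mul_mono_right ih
      _ = J * (J * I ^ m) ⊔ J * I ^ (m + 1) ⊔ (I * (J * I ^ m) ⊔ I ^ (m + 2)) := by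
        rw [sup_mul, mul_sup, mul_sup, ← pow_succ']
      _ ≤ J * I ^ (m + 1) ⊔ I ^ (m + 2) := by
        rw [hIJ]
        exact sup_le (sup_le (hJJ.trans le_sup_left) le_sup_left) le_rfl

theorem sup_pow_succ_eq_bot_of_sq_le [CommSemiring R] {I J : Ideal R} (h : J ^ 2 ≤ J * I)
    {m : ℕ} (hI : I ^ m = ⊥) : (J ⊔ I) ^ (m + 1) = ⊥ := by
  refine eq_bot_iff.2 ((sup_pow_succ_le_of_sq_le h m).trans ?_)
  rw [pow_succ', hI, mul_bot, mul_bot, sup_bot_eq]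

theorem span_singleton_sq_le_mul [CommRing R] {I : Ideal R} {x y : R} (hy : y ∈ I)
    (hxy : x * (x + y) = 0) : span {x} ^ 2 ≤ span {x} * I := by
  have hx : x ^ 2 = -(x * y) := by linear_combination hxy
  rw [span_singleton_pow, span_singleton_le_iff_mem, hx]
  exact neg_mem (mul_mem_mul (mem_span_singleton_self x) hy)

end Ideal

open Ideal in
theorem span_image_Iio_pow_eq_bot {R : Type*} [CommRing R] {n : ℕ} {u y : ℕ → R}
    (hy : ∀ i < n, y i ∈ AddSubgroup.closure (u '' Set.Iio i))
    (hu : ∀ i < n, u i * (u i + y i) = 0) {k : ℕ} (hk : k ≤ n) :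
    span (u '' Set.Iio k) ^ (k + 1) = ⊥ := by
  induction k with
  | zero => simp
  | succ k ih =>
    have hyk : y k ∈ span (u '' Set.Iio k) :=
      AddSubgroup.closure_le (K := (span (u '' Set.Iio k)).toAddSubgroup) |>.2 subset_span
        (hy k (by omega))
    have hIio : Set.Iio (k + 1) = insert k (Set.Iio k) := Order.Iio_succ_eq_insert k
    rw [hIio, Set.image_insert_eq, span_insert]
    exact sup_pow_succ_eq_bot_of_sq_le (span_singleton_sq_le_mul hyk (hu k (by omega)))
      (ih (by omega))

/-- If `u 0, …, u (n-1)` in a commutative ring satisfy `u i * (u i + y i) = 0`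
with `y i` in the additive subgroup generated by the earlier `u j`, then any
monomial `u 0 ^ l 0 ⋯ u (k-1) ^ l (k-1)` of total degree `k + 1` vanishes. -/
theorem stmt4 (R : Type*) [CommRing R] (n : ℕ) (u y : ℕ → R)
    (hy : ∀ i < n, y i ∈ AddSubgroup.closure (u '' Set.Iio i))
    (hu : ∀ i < n, u i * (u i + y i) = 0) :
    ∀ k, 1 ≤ k → k ≤ n → ∀ l : ℕ → ℕ,
      (∑ i ∈ Finset.range k, l i) = k + 1 →
      ∏ i ∈ Finset.range k, u i ^ l i = 0 := by
  intro k _ hkn l hl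
  have hmem := Ideal.prod_pow_mem_pow_sum (I := Ideal.span (u '' Set.Iio k))
    (fun i hi => Ideal.subset_span ⟨i, Finset.mem_range.1 hi, rfl⟩) l
  rwa [hl, span_image_Iio_pow_eq_bot hy hu hkn, Ideal.mem_bot] at hmem
end

section
/- Let R be a commutative ring and let u_1,…,u_n ∈ R. Suppose that for each i with 1 ≤ i ≤ n there is an element y_i ∈ R lying in the additive subgroup generated by u_1,…,u_{i−1} (so y_1 = 0), such that u_i(u_i + y_i) = 0. Then for every k with 2 ≤ k ≤ n and all nonnegative integers l_2,…,l_k with l_2 + ⋯ + l_k = k, one has y_2^{l_2} y_3^{l_3} ⋯ y_k^{l_k} = 0. -/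
/-!
Let `Iₘ` be the ideal generated by `u 0, …, u (m-1)`. Then `Iₘ ^ (m + 1) = 0`: passing from `Iₘ`
to `Iₘ₊₁ = (a) + Iₘ` with `a = u m`, the relation `a * a = a * (-y m)` with `y m ∈ Iₘ` shows
`Iₘ₊₁ ^ (j + 1) ⊆ a Iₘ ^ j + Iₘ ^ (j + 1)`. Since `y 1, …, y (k-1)` all lie in `Iₖ₋₁`, a monomial
of degree `k` in them lies in `Iₖ₋₁ ^ k = 0`.
-/

namespace Ideal

section CommSemiring

variable {R : Type*} [CommSemiring R] {A I : Ideal R}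

theorem sup_pow_succ_le_of_mul_self_le (hA : A * A ≤ A * I) (j : ℕ) :
    (A ⊔ I) ^ (j + 1) ≤ A * I ^ j ⊔ I ^ (j + 1) := by
  induction j with
  | zero => simp
  | succ j ih =>
    calc (A ⊔ I) ^ (j + 2) = (A ⊔ I) * (A ⊔ I) ^ (j + 1) := pow_succ' _ _
      _ ≤ (A ⊔ I) * (A * I ^ j ⊔ I ^ (j + 1)) := mul_mono_right ih
      _ = A * (A * I ^ j) ⊔ A * (I * I ^ j) ⊔ (A * I ^ (j + 1) ⊔ I * I ^ (j + 1)) := by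
        simp only [sup_mul, mul_sup, mul_left_comm I A]
      _ ≤ A * I ^ (j + 1) ⊔ I ^ (j + 2) := by
        have hAA : A * (A * I ^ j) ≤ A * I ^ (j + 1) := by
          rw [← mul_assoc, pow_succ', ← mul_assoc]
          exact mul_mono_left hA
        simp only [← pow_succ']
        exact sup_le (sup_le (hAA.trans le_sup_left) le_sup_left) (sup_le le_sup_left le_sup_right)

theorem sup_pow_eq_bot_of_mul_self_le {m : ℕ} (hI : I ^ (m + 1) = ⊥) (hA : A * A ≤ A * I) :
    (A ⊔ I) ^ (m + 2) = ⊥ :=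
  le_bot_iff.mp <| (sup_pow_succ_le_of_mul_self_le hA (m + 1)).trans <| by
    simp [pow_succ, hI]

end CommSemiring

variable {R : Type*} [CommRing R]

theorem span_singleton_mul_self_le {a y : R} {I : Ideal R} (hy : y ∈ I) (h : a * (a + y) = 0) :
    span {a} * span {a} ≤ span {a} * I := by
  rw [span_singleton_mul_span_singleton, span_singleton_le_iff_mem]
  have : a * a = a * -y := by linear_combination h
  exact this ▸ mul_mem_mul (mem_span_singleton_self a) (neg_mem hy)

theorem span_image_Iio_pow_eq_bot {n : ℕ} {u y : ℕ → R}
    (hy : ∀ i < n, y i ∈ span (u '' Set.Iio i)) (hu : ∀ i < n, u i * (u i + y i) = 0) :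
    ∀ m ≤ n, span (u '' Set.Iio m) ^ (m + 1) = ⊥
  | 0, _ => by simp
  | m + 1, hm => by
    have hspan : span (u '' Set.Iio (m + 1)) = span {u m} ⊔ span (u '' Set.Iio m) := by
      rw [Set.Iio_add_one_eq_Iic, ← Set.Iio_insert, Set.image_insert_eq, span_insert]
    rw [hspan]
    exact sup_pow_eq_bot_of_mul_self_le (span_image_Iio_pow_eq_bot hy hu m (by omega))
      (span_singleton_mul_self_le (hy m hm) (hu m hm))

end Ideal

/-- If `u 0, …, u (n-1)` in a commutative ring satisfy `u i * (u i + y i) = 0`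
with `y i` in the additive subgroup generated by the earlier `u j`, then any
monomial `y 1 ^ l 1 ⋯ y (k-1) ^ l (k-1)` of total degree `k` vanishes. -/
theorem stmt5 (R : Type*) [CommRing R] (n : ℕ) (u y : ℕ → R)
    (hy : ∀ i < n, y i ∈ AddSubgroup.closure (u '' Set.Iio i))
    (hu : ∀ i < n, u i * (u i + y i) = 0) :
    ∀ k, 2 ≤ k → k ≤ n → ∀ l : ℕ → ℕ,
      (∑ i ∈ Finset.Ico 1 k, l i) = k →
      ∏ i ∈ Finset.Ico 1 k, y i ^ l i = 0 := by
  intro k hk hkn l hl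
  set I := Ideal.span (u '' Set.Iio (k - 1))
  have hy' : ∀ i < n, y i ∈ Ideal.span (u '' Set.Iio i) := fun i hi ↦
    (AddSubgroup.closure_le (Ideal.span _).toAddSubgroup).mpr Ideal.subset_span (hy i hi)
  have hyI : ∀ i ∈ Finset.Ico 1 k, y i ∈ I := fun i hi ↦ by
    have hi := Finset.mem_Ico.mp hi
    exact Ideal.span_mono (Set.image_mono (Set.Iio_subset_Iio (by omega))) (hy' i (by omega))
  have hIk : I ^ k = ⊥ := by
    simpa [Nat.sub_add_cancel (by omega : 1 ≤ k)] using
      Ideal.span_image_Iio_pow_eq_bot hy' hu (k - 1) (by omega)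
  have hmem : ∏ i ∈ Finset.Ico 1 k, y i ^ l i ∈ ∏ i ∈ Finset.Ico 1 k, I ^ l i :=
    Ideal.prod_mem_prod fun i hi ↦ Ideal.pow_mem_pow (hyI i hi) _
  rwa [Finset.prod_pow_eq_pow_sum, hl, hIk, Ideal.mem_bot] at hmem
end

section
/- Let k ≥ 1 and set l = 2^k − 1. Let R be a commutative ring in which 2 = 0, and let u, y_1,…,y_l ∈ R. For 0 ≤ i ≤ l let σ_i denote the i-th elementary symmetric polynomial in y_1,…,y_l (with σ_0 = 1). Suppose σ_i = 0 for every i with 1 ≤ i ≤ l such that l + 1 − i is not of the form 2^j for some 0 ≤ j ≤ k. Then (1+u)·∏_{j=1}^{l}(1 + u + y_j) = ∑_{j=0}^{k} (1 + u^{2^j}) · σ_{l+1−2^j}. -/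
/-! Expanding the product by Vieta gives `(1+u) ∏ (1+u+y j) = ∑_{i<2^k} σ_i (1+u)^(2^k-i)`.
The hypothesis kills every term whose exponent `2^k - i` is not a power of two, and on the
remaining terms `(1+u)^(2^j) = 1 + u^(2^j)` because squaring is additive in characteristic 2. -/

open Finset Polynomial

theorem Finset.prod_add_eq_sum_esymm {ι R : Type*} [CommSemiring R] (s : Finset ι) (a : R)
    (y : ι → R) :
    ∏ j ∈ s, (a + y j) =
      ∑ i ∈ range (#s + 1), (∑ t ∈ s.powersetCard i, ∏ j ∈ t, y j) * a ^ (#s - i) := by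
  have := congrArg (eval a) (Multiset.prod_X_add_C_eq_sum_esymm (s.val.map y))
  simp only [eval_multiset_prod, Multiset.map_map, eval_finsetSum, Multiset.card_map,
    Function.comp_def, eval_add, eval_X, eval_C, eval_mul, eval_pow, Finset.esymm_map_val] at this
  exact this

theorem add_pow_two_pow_of_two_eq_zero {R : Type*} [CommSemiring R] (h2 : (2 : R) = 0)
    (a b : R) (n : ℕ) : (a + b) ^ 2 ^ n = a ^ 2 ^ n + b ^ 2 ^ n := by
  induction n with
  | zero => simp
  | succ n ih =>
    rw [pow_succ, pow_mul, ih, add_sq, mul_assoc, h2, zero_mul, add_zero, ← pow_mul, ← pow_mul,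
      ← pow_succ]

theorem sum_range_two_pow_eq_sum_sub_two_pow {M : Type*} [AddCommMonoid M] (k : ℕ) (f : ℕ → M)
    (hf : ∀ i < 2 ^ k, (∀ j ≤ k, 2 ^ k - i ≠ 2 ^ j) → f i = 0) :
    ∑ i ∈ range (2 ^ k), f i = ∑ j ∈ range (k + 1), f (2 ^ k - 2 ^ j) := by
  have hpow : ∀ j ∈ range (k + 1), 2 ^ j ≤ 2 ^ k := fun j hj =>
    Nat.pow_le_pow_right two_pos (Nat.lt_succ_iff.mp (mem_range.mp hj))
  rw [← sum_image fun a ha b hb hab =>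
    Nat.pow_right_injective le_rfl ((tsub_right_inj (hpow a ha) (hpow b hb)).mp hab)]
  symm
  refine sum_subset (fun i hi => ?_) fun i hi hiS => hf i (mem_range.mp hi) fun j hj hji => hiS ?_
  · obtain ⟨j, hj, rfl⟩ := mem_image.mp hi
    have := hpow j hj
    have := Nat.one_le_two_pow (n := j)
    exact mem_range.mpr (by omega)
  · have := mem_range.mp hi
    exact mem_image.mpr ⟨j, mem_range.mpr (by omega), by omega⟩

theorem stmt7_general (k : ℕ) (R : Type*) [CommRing R] (h2 : (2 : R) = 0)
    (u : R) (y : Fin (2 ^ k - 1) → R) (σ : ℕ → R)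
    (hσdef : ∀ i, σ i =
      ∑ t ∈ (Finset.univ : Finset (Fin (2 ^ k - 1))).powersetCard i, ∏ j ∈ t, y j)
    (hσ : ∀ i, 1 ≤ i → i ≤ 2 ^ k - 1 → (∀ j ≤ k, 2 ^ k - i ≠ 2 ^ j) → σ i = 0) :
    (1 + u) * ∏ j, (1 + u + y j) =
      ∑ j ∈ Finset.range (k + 1), (1 + u ^ 2 ^ j) * σ (2 ^ k - 2 ^ j) := by
  have hl : 2 ^ k - 1 + 1 = 2 ^ k := Nat.sub_add_cancel Nat.one_le_two_pow
  have hexpand : (1 + u) * ∏ j, (1 + u + y j) =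
      ∑ i ∈ range (2 ^ k), σ i * (1 + u) ^ (2 ^ k - i) := by
    rw [prod_add_eq_sum_esymm, card_univ, Fintype.card_fin, hl, mul_sum]
    refine sum_congr rfl fun i hi => ?_
    have : 2 ^ k - i = 2 ^ k - 1 - i + 1 := by have := mem_range.mp hi; omega
    rw [← hσdef, this, pow_succ]
    ring
  rw [hexpand, sum_range_two_pow_eq_sum_sub_two_pow k]
  · refine sum_congr rfl fun j hj => ?_
    rw [Nat.sub_sub_self (Nat.pow_le_pow_right two_pos (Nat.lt_succ_iff.mp (mem_range.mp hj))),
      add_pow_two_pow_of_two_eq_zero h2, one_pow, mul_comm]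
  · intro i hi hpow
    obtain rfl | hi0 := Nat.eq_zero_or_pos i
    · exact absurd rfl (hpow k le_rfl)
    · rw [hσ i hi0 (by omega) hpow, zero_mul]

/-- In a commutative ring of characteristic 2, with `l = 2^k - 1`, if the
elementary symmetric polynomials `σ i` of `y 1, …, y l` vanish for every
`1 ≤ i ≤ l` such that `l + 1 - i` is not a power `2^j` with `j ≤ k`, then
`(1+u) ∏ (1+u+y j) = ∑_{j=0}^{k} (1 + u^{2^j}) σ_{l+1-2^j}`. -/
theorem stmt7 (k : ℕ) (hk : 1 ≤ k) (R : Type*) [CommRing R] (h2 : (2 : R) = 0)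
    (u : R) (y : Fin (2 ^ k - 1) → R) (σ : ℕ → R)
    (hσdef : ∀ i, σ i =
      ∑ t ∈ (Finset.univ : Finset (Fin (2 ^ k - 1))).powersetCard i, ∏ j ∈ t, y j)
    (hσ : ∀ i, 1 ≤ i → i ≤ 2 ^ k - 1 → (∀ j ≤ k, 2 ^ k - i ≠ 2 ^ j) → σ i = 0) :
    (1 + u) * ∏ j, (1 + u + y j) =
      ∑ j ∈ Finset.range (k + 1), (1 + u ^ 2 ^ j) * σ (2 ^ k - 2 ^ j) :=
  stmt7_general k R h2 u y σ hσdef hσ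
end

section
/- In the polynomial ring (Z/2Z)[u_1, u_2], the element u_2^4 (u_1 + u_2)^2 does not belong to the ideal generated by u_1^4 and u_2 (u_1 + u_2)^3. -/
/-!
The substitution `u₁ ↦ u₁ + u₂` turns `u₁ + u₂` into `u₁` in characteristic 2, so it carries the
generators to `u₁⁴ + u₂⁴` and `u₂u₁³` and the element to `u₂⁴u₁²`. In a relation
`a (u₁⁴ + u₂⁴) + b u₂u₁³ = u₂⁴u₁²` the second term has no `u₁²u₂⁴` and no `u₁⁶` coefficient, so
comparing these two coefficients makes the `u₁²`-coefficient of `a` both `1` and `0`.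
-/

open MvPolynomial

namespace MvPolynomial

variable {R σ : Type*} [CommSemiring R]

theorem coeff_mul_X_pow_of_lt (p : MvPolynomial σ R) {m : σ →₀ ℕ} {i : σ} {n : ℕ}
    (h : m i < n) : coeff m (p * X i ^ n) = 0 := by
  rw [X_pow_eq_monomial, coeff_mul_monomial', if_neg (by rw [Finsupp.single_le_iff]; omega)]

theorem coeff_add_single_mul_X_pow (p : MvPolynomial σ R) (m : σ →₀ ℕ) (i : σ) (n : ℕ) :
    coeff (m + Finsupp.single i n) (p * X i ^ n) = coeff m p := by
  rw [X_pow_eq_monomial, coeff_mul_monomial, mul_one]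

theorem X_pow_four_mul_X_sq_notMem_span [Nontrivial R] {i j : σ} (hij : i ≠ j) :
    (X j ^ 4 * X i ^ 2 : MvPolynomial σ R) ∉
      Ideal.span {X i ^ 4 + X j ^ 4, X j * X i ^ 3} := by
  classical
  rw [Ideal.mem_span_pair]
  rintro ⟨a, b, hab⟩
  have coeff_a_eq_one : coeff (Finsupp.single i 2) a = 1 := by
    have h : a * X i ^ 4 + a * X j ^ 4 + b * X j * X i ^ 3 = X i ^ 2 * X j ^ 4 := by
      rw [mul_comm (X i ^ 2), ← hab]; ring
    replace h := congrArg (coeff (Finsupp.single i 2 + Finsupp.single j 4)) h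
    simpa [coeff_mul_X_pow_of_lt, coeff_add_single_mul_X_pow, coeff_single_X_pow, hij] using h
  have coeff_a_eq_zero : coeff (Finsupp.single i 2) a = 0 := by
    have h : a * X j ^ 4 + b * X i ^ 3 * X j + a * X i ^ 4 = X i ^ 2 * X j ^ 4 := by
      rw [mul_comm (X i ^ 2), ← hab]; ring
    replace h := congrArg (coeff (Finsupp.single i 2 + Finsupp.single i 4)) h
    simpa [coeff_mul_X_pow_of_lt, coeff_add_single_mul_X_pow, coeff_mul_X', hij] using h
  exact one_ne_zero (coeff_a_eq_one.symm.trans coeff_a_eq_zero)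

end MvPolynomial

/-- In `(Z/2Z)[u₁, u₂]`, the element `u₂^4 (u₁+u₂)^2` does not belong to the
ideal generated by `u₁^4` and `u₂ (u₁+u₂)^3`. -/
theorem stmt8 :
    (X 1 ^ 4 * (X 0 + X 1) ^ 2 : MvPolynomial (Fin 2) (ZMod 2)) ∉
      Ideal.span {(X 0 ^ 4 : MvPolynomial (Fin 2) (ZMod 2)),
        X 1 * (X 0 + X 1) ^ 3} := by
  intro h
  have h' := Ideal.mem_map_of_mem (aeval ![(X 0 + X 1 : MvPolynomial (Fin 2) (ZMod 2)), X 1]) h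
  rw [Ideal.map_span, Set.image_pair] at h'
  simp only [map_mul, map_pow, map_add, aeval_X, Matrix.cons_val_zero, Matrix.cons_val_one,
    add_assoc, CharTwo.add_self_eq_zero, add_zero] at h'
  rw [show 4 = 2 ^ 2 from rfl, add_pow_char_pow] at h'
  exact X_pow_four_mul_X_sq_notMem_span (by decide) h'
end

section
/- Let n ≥ 2 be an even integer and let b_1,…,b_n be nonzero integers with b_1 b_2 ⋯ b_n = 2. In the polynomial ring Z[u_1,…,u_n], let I be the ideal generated by the n elements u_1(u_1 + b_n u_n) and u_i(u_i + b_{i−1} u_{i−1}) for 2 ≤ i ≤ n. Then there exists a nonzero integer c such that ∑_{j=1}^{n} (b_j u_j)^n − c · u_1 u_2 ⋯ u_n ∈ I. -/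
/-!
Modulo the relations, `u i ^ 2 = -b (i - 1) * u (i - 1) * u i`, so `u i ^ (m + 1)` equals
`(-b (i - 1)) ^ m * u (i - 1) ^ m * u i`; iterating around the cycle, `u i ^ n` becomes
`∏ t, (-b t) ^ ((t - i) mod n)` times `u 0 ⋯ u (n - 1)`. As `∏ b = 2`, exactly one `b s` is
`±2` and the others are `±1`, so the `i`-th summand `b i ^ n * ∏ t, (-b t) ^ ((t - i) mod n)`
of the resulting coefficient is `±2 ^ ((s - i) mod n)` (times `2 ^ n` if `i = s`). It is
divisible by 4 except for `i = s - 1`, where it is `±2`; hence the coefficient is `2` mod `4`,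
and not zero.
-/

open MvPolynomial Finset
open scoped Fin.NatCast Fin.CommRing

theorem pow_succ_eq_of_mul_add_mul_eq_zero {R : Type*} [CommRing R] {y c z : R}
    (h : y * (y + c * z) = 0) (m : ℕ) : y ^ (m + 1) = (-c * z) ^ m * y := by
  induction m with
  | zero => simp
  | succ m ih =>
    rw [pow_succ, ih, pow_succ]
    linear_combination (-c * z) ^ m * h

theorem pow_eq_prod_mul_prod_of_mul_add_mul_eq_zero {G R : Type*} [AddMonoidWithOne G]
    [CommRing R] {x a : G → R} (h : ∀ q, x (q + 1) * (x (q + 1) + a q * x q) = 0)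
    (p : G) (m : ℕ) :
    x (p + m) ^ (m + 1) =
      (∏ k ∈ range m, (-a (p + k)) ^ (k + 1)) * ∏ k ∈ range (m + 1), x (p + k) := by
  induction m with
  | zero => simp
  | succ m ih =>
    rw [Nat.cast_succ, ← add_assoc, pow_succ_eq_of_mul_add_mul_eq_zero (h _), mul_pow, ih,
      prod_range_succ (fun k => (-a (p + k)) ^ (k + 1)) m,
      prod_range_succ (fun k => x (p + k)) (m + 1), Nat.cast_succ, ← add_assoc]
    ring

def cyclicPowCoeff {R : Type*} [CommRing R] {n : ℕ} (a : Fin n → R) (i : Fin n) : R :=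
  ∏ t, (-a t) ^ (t - i).val

theorem pow_eq_cyclicPowCoeff_mul_prod {R : Type*} [CommRing R] {n : ℕ} [NeZero n]
    {x a : Fin n → R} (h : ∀ q, x (q + 1) * (x (q + 1) + a q * x q) = 0) (i : Fin n) :
    x i ^ n = cyclicPowCoeff a i * ∏ t, x t := by
  obtain ⟨m, rfl⟩ : ∃ m, n = m + 1 := Nat.exists_eq_succ_of_ne_zero (NeZero.ne n)
  have hcycle : i + 1 + (m : Fin (m + 1)) = i := by
    have h0 : ((m + 1 : ℕ) : Fin (m + 1)) = 0 := Fin.natCast_self _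
    push_cast at h0
    linear_combination h0
  have hx : ∏ k ∈ range (m + 1), x (i + 1 + k) = ∏ t, x t := by
    rw [← Fin.prod_univ_eq_prod_range (fun k => x (i + 1 + k))]
    simp only [Fin.cast_val_eq_self]
    exact Fintype.prod_equiv (Equiv.addLeft (i + 1)) _ _ fun _ => rfl
  have hc : ∏ k ∈ range m, (-a (i + 1 + k)) ^ (k + 1) = cyclicPowCoeff a i := by
    have hval : cyclicPowCoeff a i = ∏ k ∈ range (m + 1), (-a (i + k)) ^ k := by
      rw [← Fin.prod_univ_eq_prod_range (fun k => (-a (i + k)) ^ k)]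
      refine Fintype.prod_equiv (Equiv.subRight i) _ _ fun t => ?_
      simp
    rw [hval, prod_range_succ']
    simp only [Nat.cast_succ, pow_zero, mul_one]
    refine prod_congr rfl fun k _ => ?_
    rw [add_right_comm, add_assoc]
  rw [← hc, ← hx, ← pow_eq_prod_mul_prod_of_mul_add_mul_eq_zero h, hcycle]

theorem exists_natAbs_eq_two_of_prod_eq_two {ι : Type*} [Fintype ι] [DecidableEq ι]
    {b : ι → ℤ} (h : ∏ i, b i = 2) :
    ∃ s, (b s).natAbs = 2 ∧ ∀ i ≠ s, (b i).natAbs = 1 := by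
  obtain ⟨s, -, k, hk⟩ := Int.prime_two.exists_mem_finset_dvd (dvd_of_eq h.symm)
  have hunit : (∏ i ∈ univ.erase s, b i) * k = 1 := by
    have := prod_erase_mul univ b (mem_univ s)
    rw [hk, h] at this
    linarith
  refine ⟨s, ?_, fun i hi => Int.isUnit_iff_natAbs_eq.mp (isUnit_of_dvd_one ?_)⟩
  · rw [hk, Int.natAbs_mul, Int.isUnit_iff_natAbs_eq.mp (IsUnit.of_mul_eq_one_right _ hunit)]
    rfl
  · exact (dvd_prod_of_mem b (mem_erase.2 ⟨hi, mem_univ i⟩)).trans (Dvd.intro k hunit)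

theorem natAbs_prod_pow_eq_two_pow {ι : Type*} [Fintype ι] {b : ι → ℤ} {s : ι}
    (hs : (b s).natAbs = 2) (h1 : ∀ i ≠ s, (b i).natAbs = 1) (e : ι → ℕ) :
    (∏ t, b t ^ e t).natAbs = 2 ^ e s := by
  rw [show (∏ t, b t ^ e t).natAbs = ∏ t, (b t ^ e t).natAbs from map_prod Int.natAbsHom _ _,
    prod_eq_single s (fun t _ ht => by simp [h1 t ht]) (by simp)]
  simp [hs]

theorem not_dvd_sum_of_not_dvd_of_dvd {ι α : Type*} [CommRing α] [DecidableEq ι] {s : Finset ι}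
    {f : ι → α} {p : α} {i₀ : ι} (hi₀ : i₀ ∈ s) (hpi₀ : ¬ p ∣ f i₀)
    (hp : ∀ i ∈ s, i ≠ i₀ → p ∣ f i) : ¬ p ∣ ∑ i ∈ s, f i := by
  rw [← add_sum_erase s f hi₀, dvd_add_left (dvd_sum fun i hi => hp i (mem_of_mem_erase hi)
    (ne_of_mem_erase hi))]
  exact hpi₀

theorem Fin.val_one_of_two_le {n : ℕ} [NeZero n] (hn : 2 ≤ n) : (1 : Fin n).val = 1 := by
  rw [Fin.val_one', Nat.mod_eq_of_lt hn]

theorem not_four_dvd_sum_pow_mul_cyclicPowCoeff {n : ℕ} [NeZero n] (hn : 2 ≤ n)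
    {b : Fin n → ℤ} (h : ∏ i, b i = 2) : ¬ 4 ∣ ∑ i, b i ^ n * cyclicPowCoeff b i := by
  obtain ⟨s, hs, h1⟩ := exists_natAbs_eq_two_of_prod_eq_two h
  have habs : ∀ i,
      (b i ^ n * cyclicPowCoeff b i).natAbs = (b i).natAbs ^ n * 2 ^ (s - i).val := by
    intro i
    rw [Int.natAbs_mul, Int.natAbs_pow, cyclicPowCoeff,
      natAbs_prod_pow_eq_two_pow (b := fun t => -b t) (by simpa using hs) (by simpa using h1)]
  have hsub : s - 1 ≠ s := by
    have : Nontrivial (Fin n) := Fin.nontrivial_iff_two_le.mpr hn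
    exact sub_eq_self.not.mpr one_ne_zero
  refine not_dvd_sum_of_not_dvd_of_dvd (mem_univ (s - 1)) ?_ fun i _ hi => ?_ <;>
    rw [← Int.natAbs_dvd_natAbs, habs]
  · rw [h1 _ hsub, sub_sub_cancel, Fin.val_one_of_two_le hn]
    norm_num
  · by_cases his : i = s
    · rw [his, hs, sub_self, Fin.val_zero, pow_zero, mul_one]
      exact (pow_dvd_pow 2 hn :)
    · have hne0 : (s - i).val ≠ 0 := Fin.val_ne_zero_iff.mpr (sub_ne_zero.mpr (Ne.symm his))
      have hne1 : (s - i).val ≠ 1 := fun h => hi (eq_sub_of_add_eq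
        (sub_eq_iff_eq_add'.mp (Fin.ext (h.trans (Fin.val_one_of_two_le hn).symm))).symm)
      rw [h1 i his, one_pow, one_mul]
      exact (pow_dvd_pow 2 (by omega : 2 ≤ (s - i).val) :)

theorem map_cyclicPowCoeff {R S : Type*} [CommRing R] [CommRing S] (f : R →+* S) {n : ℕ}
    (a : Fin n → R) (i : Fin n) : f (cyclicPowCoeff a i) = cyclicPowCoeff (f ∘ a) i := by
  simp [cyclicPowCoeff, map_prod]

theorem sum_pow_sub_mem_of_mul_add_mul_mem {R : Type*} [CommRing R] {n : ℕ} [NeZero n]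
    {J : Ideal (MvPolynomial (Fin n) R)} (b : Fin n → R)
    (hJ : ∀ q, X (q + 1) * (X (q + 1) + C (b q) * X q) ∈ J) :
    ∑ j, (C (b j) * X j) ^ n - C (∑ i, b i ^ n * cyclicPowCoeff b i) * ∏ j, X j ∈ J := by
  rw [← Ideal.Quotient.eq]
  set π := Ideal.Quotient.mk J
  have hpow := pow_eq_cyclicPowCoeff_mul_prod (x := fun q => π (X q)) (a := fun q => π (C (b q)))
    fun q => by simpa using Ideal.Quotient.eq_zero_iff_mem.mpr (hJ q)
  simp only [map_sum, map_mul, map_pow, mul_pow, map_prod, hpow, map_cyclicPowCoeff, sum_mul,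
    mul_assoc, Function.comp_def]

/-- For `n ≥ 2` even and nonzero integers `b 0, …, b (n-1)` with product 2,
in `ℤ[u₀,…,u_{n-1}]` the power sum `∑ (b j * u j)^n` is congruent, modulo the
ideal generated by the elements `u i (u i + b (i-1) * u (i-1))` (indices
cyclic), to a nonzero integer multiple of `u₀ u₁ ⋯ u_{n-1}`. -/
theorem stmt9 (n : ℕ) (hn : 2 ≤ n) (b : Fin n → ℤ)
    (hprod : ∏ i, b i = 2) :
    ∃ c : ℤ, c ≠ 0 ∧
      (∑ j, (C (b j) * X j) ^ n) - C c * ∏ j, X j ∈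
        Ideal.span (Set.range fun i : Fin n =>
          (X i * (X i + C (b (i - ⟨1, by omega⟩)) * X (i - ⟨1, by omega⟩)) :
            MvPolynomial (Fin n) ℤ)) := by
  have : NeZero n := ⟨by omega⟩
  have hone : (⟨1, by omega⟩ : Fin n) = 1 := Fin.ext (Fin.val_one_of_two_le hn).symm
  refine ⟨∑ i, b i ^ n * cyclicPowCoeff b i,
    fun h0 => not_four_dvd_sum_pow_mul_cyclicPowCoeff hn hprod (h0 ▸ dvd_zero 4),
    sum_pow_sub_mem_of_mul_add_mul_mem b fun q => Ideal.subset_span ⟨q + 1, by simp [hone]⟩⟩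
end
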